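/- arXiv:2412.01510 — 5 statements merged into one kernel-verified Lean document; each statement's English description precedes it below -/
import Mathlib

section
/- Let E be a finite-dimensional real inner product space, let Φ be a finite multiset of vectors of E, let r be a natural number, and let k be a natural number with 1 ≤ k ≤ 1 + r + card Φ. For ξ ∈ E let M(ξ) be the multiset of real numbers consisting of ‖ξ‖² (once), 0 (r times), and −⟨α, ξ⟩ for each α ∈ Φ (counted with multiplicity). Let Ω = {ξ ∈ E : τ_k(M(ξ)) < 0}. Then Ω is an open convex subset of E, and moreover t·ξ ∈ Ω for every ξ ∈ Ω and every t ∈ (0,1]; in particular Ω ∪ {0} is star-shaped with respect to the origin. -/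
lemma ktrace_aux_le_add_decomp {α : Type*} [DecidableEq α] {t u v : Multiset α}
    (h : t ≤ u + v) : ∃ t1 ≤ u, ∃ t2 ≤ v, t = t1 + t2 := by
  refine ⟨t ∩ u, Multiset.inter_le_right, t - u, ?_, ?_⟩
  · rw [Multiset.sub_le_iff_le_add]
    rwa [add_comm]
  · ext a
    have := Multiset.le_iff_count.mp h a
    rw [Multiset.count_add] at this
    rw [Multiset.count_add, Multiset.count_inter, Multiset.count_sub]
    omega

lemma ktrace_aux_exists_map_of_le {α β : Type*} [DecidableEq β] {f : α → β} :
    ∀ {Φ : Multiset α} {t : Multiset β}, t ≤ Φ.map f → ∃ ψ ≤ Φ, t = ψ.map f := by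
  intro Φ
  induction Φ using Multiset.induction with
  | empty => intro t h; simp only [Multiset.map_zero, Multiset.le_zero] at h
             exact ⟨0, le_refl _, by simp [h]⟩
  | cons a Φ ih =>
    intro t h
    rw [Multiset.map_cons] at h
    by_cases hm : f a ∈ t
    · obtain ⟨ψ, hψ, he⟩ := ih (Multiset.erase_le_iff_le_cons.mpr h)
      exact ⟨a ::ₘ ψ, Multiset.cons_le_cons _ hψ,
        by rw [Multiset.map_cons, ← he, Multiset.cons_erase hm]⟩
    · obtain ⟨ψ, hψ, he⟩ := ih ((Multiset.le_cons_of_notMem hm).1 h)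
      exact ⟨ψ, hψ.trans (Multiset.le_cons_self _ _), he⟩

open RealInnerProductSpace in
lemma ktrace_aux_sum_map_neg_inner {E : Type} [NormedAddCommGroup E] [InnerProductSpace ℝ E]
    (ξ : E) (ψ : Multiset E) : (ψ.map fun α => -⟪α, ξ⟫).sum = -⟪ψ.sum, ξ⟫ := by
  induction ψ using Multiset.induction with
  | empty => simp
  | cons a s ih => simp [ih, inner_add_left]; ring

lemma ktrace_aux_combo_neg {a b G G' : ℝ} (ha : 0 ≤ a) (hb : 0 ≤ b) (hab : a + b = 1)
    (h : G < 0) (h' : G' < 0) : a * G + b * G' < 0 := by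
  rcases ha.eq_or_lt with h0 | h0
  · have : b = 1 := by linarith
    rw [← h0, this]; linarith
  · nlinarith [mul_nonpos_of_nonneg_of_nonpos hb h'.le, mul_neg_of_pos_of_neg h0 h]

/-- The `k`-trace of a finite multiset of real numbers: the sum of its `k` largest elements,
i.e. the supremum of the sums of its sub-multisets of cardinality `k`. -/
noncomputable def ktrace (k : ℕ) (s : Multiset ℝ) : ℝ :=
  sSup {x : ℝ | ∃ t ≤ s, Multiset.card t = k ∧ t.sum = x}

open RealInnerProductSpace in
/-- `Ω = {ξ | τ_k(M(ξ)) < 0}` is open, convex, and `t • ξ ∈ Ω` for `ξ ∈ Ω`,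
`t ∈ (0,1]`; in particular `Ω ∪ {0}` is star-shaped with respect to the origin. -/
theorem stmt0 {E : Type} [NormedAddCommGroup E] [InnerProductSpace ℝ E]
    [FiniteDimensional ℝ E] (Φ : Multiset E) (r k : ℕ)
    (hk1 : 1 ≤ k) (hk2 : k ≤ 1 + r + Multiset.card Φ) :
    let Mset : E → Multiset ℝ := fun ξ =>
      ‖ξ‖ ^ 2 ::ₘ (Multiset.replicate r (0 : ℝ) + Φ.map fun α => -⟪α, ξ⟫)
    let Ω : Set E := {ξ | ktrace k (Mset ξ) < 0}
    IsOpen Ω ∧ Convex ℝ Ω ∧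
      (∀ ξ ∈ Ω, ∀ t : ℝ, 0 < t → t ≤ 1 → t • ξ ∈ Ω) ∧
      StarConvex ℝ (0 : E) (Ω ∪ {0}) := by
  classical
  intro Mset Ω
  have hMcard : ∀ ξ : E, Multiset.card (Mset ξ) = 1 + r + Multiset.card Φ := by
    intro ξ
    simp only [Mset, Multiset.card_cons, Multiset.card_add, Multiset.card_replicate,
      Multiset.card_map]
    omega
  -- the set of candidate sums
  have hSeq : ∀ ξ : E, {x : ℝ | ∃ t ≤ Mset ξ, Multiset.card t = k ∧ t.sum = x} =
      Multiset.sum '' {t | t ∈ Multiset.powersetCard k (Mset ξ)} := by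
    intro ξ
    ext x
    simp only [Set.mem_setOf_eq, Set.mem_image, Multiset.mem_powersetCard]
    constructor
    · rintro ⟨t, ht, hc, hs⟩; exact ⟨t, ⟨ht, hc⟩, hs⟩
    · rintro ⟨t, ⟨ht, hc⟩, hs⟩; exact ⟨t, ht, hc, hs⟩
  have hfin : ∀ ξ : E, {x : ℝ | ∃ t ≤ Mset ξ, Multiset.card t = k ∧ t.sum = x}.Finite := by
    intro ξ
    rw [hSeq]
    exact (Multiset.powersetCard k (Mset ξ)).finite_toSet.image _
  have hne : ∀ ξ : E, {x : ℝ | ∃ t ≤ Mset ξ, Multiset.card t = k ∧ t.sum = x}.Nonempty := by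
    intro ξ
    have hpos : 0 < Multiset.card (Multiset.powersetCard k (Mset ξ)) := by
      rw [Multiset.card_powersetCard]
      exact Nat.choose_pos (by rw [hMcard]; omega)
    obtain ⟨t, ht⟩ := Multiset.exists_mem_of_ne_zero (Multiset.card_pos.mp hpos)
    rw [Multiset.mem_powersetCard] at ht
    exact ⟨t.sum, t, ht.1, ht.2, rfl⟩
  have hlt : ∀ ξ : E, (ξ ∈ Ω ↔ ∀ t ≤ Mset ξ, Multiset.card t = k → t.sum < 0) := by
    intro ξ
    show ktrace k (Mset ξ) < 0 ↔ _
    rw [ktrace, (hfin ξ).csSup_lt_iff (hne ξ)]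
    constructor
    · intro h t ht hc; exact h _ ⟨t, ht, hc, rfl⟩
    · rintro h x ⟨t, ht, hc, rfl⟩; exact h t ht hc
  -- key characterization
  have key : ∀ ξ : E, ξ ∈ Ω ↔ ∀ (c : ℕ) (ψ : Multiset E), c ≤ 1 → ψ ≤ Φ →
      c + Multiset.card ψ ≤ k → k ≤ c + Multiset.card ψ + r →
      (c : ℝ) * ‖ξ‖ ^ 2 - ⟪ψ.sum, ξ⟫ < 0 := by
    intro ξ
    rw [hlt]
    constructor
    · intro h c ψ hc hψ h1 h2
      set t : Multiset ℝ := Multiset.replicate c (‖ξ‖ ^ 2) +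
        (Multiset.replicate (k - c - Multiset.card ψ) (0 : ℝ) +
          ψ.map fun α => -⟪α, ξ⟫) with ht_def
      have ht : t ≤ Mset ξ := by
        show t ≤ ‖ξ‖ ^ 2 ::ₘ _
        rw [← Multiset.singleton_add, show ({‖ξ‖ ^ 2} : Multiset ℝ) =
          Multiset.replicate 1 (‖ξ‖ ^ 2) from rfl]
        exact add_le_add ((Multiset.replicate_le_replicate _).2 hc)
          (add_le_add ((Multiset.replicate_le_replicate _).2 (by omega))
            (Multiset.map_le_map hψ))
      have hcard : Multiset.card t = k := by
        simp only [ht_def, Multiset.card_add, Multiset.card_replicate, Multiset.card_map]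
        omega
      have hs : t.sum = (c : ℝ) * ‖ξ‖ ^ 2 - ⟪ψ.sum, ξ⟫ := by
        simp only [ht_def, Multiset.sum_add, Multiset.sum_replicate, smul_zero,
          ktrace_aux_sum_map_neg_inner, nsmul_eq_mul]
        ring
      have := h t ht hcard
      rwa [hs] at this
    · intro h t ht hcard
      rw [show Mset ξ = {‖ξ‖ ^ 2} +
          (Multiset.replicate r (0 : ℝ) + Φ.map fun α => -⟪α, ξ⟫) by
        rw [Multiset.singleton_add]] at ht
      obtain ⟨t0, ht0, t12, ht12, heq⟩ := ktrace_aux_le_add_decomp ht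
      obtain ⟨t1, ht1, t2, ht2, heq2⟩ := ktrace_aux_le_add_decomp ht12
      subst heq2; subst heq
      obtain ⟨j, hj, rfl⟩ := Multiset.le_replicate_iff.mp ht1
      obtain ⟨ψ, hψ, rfl⟩ := ktrace_aux_exists_map_of_le ht2
      simp only [Multiset.card_add, Multiset.card_replicate, Multiset.card_map] at hcard
      rcases Multiset.le_singleton.mp ht0 with h0 | h0 <;> subst h0
      · have := h 0 ψ (by omega) hψ (by simp at hcard; omega) (by simp at hcard; omega)
        simp only [Nat.cast_zero, zero_mul, zero_sub] at this
        have hs : ((0 : Multiset ℝ) + (Multiset.replicate j (0:ℝ) +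
            ψ.map fun α => -⟪α, ξ⟫)).sum = -⟪ψ.sum, ξ⟫ := by
          rw [zero_add, Multiset.sum_add, Multiset.sum_replicate, smul_zero,
            ktrace_aux_sum_map_neg_inner, zero_add]
        rw [hs]; exact this
      · have := h 1 ψ le_rfl hψ (by simp at hcard; omega) (by simp at hcard; omega)
        simp only [Nat.cast_one, one_mul] at this
        have hs : (({‖ξ‖ ^ 2} : Multiset ℝ) + (Multiset.replicate j (0:ℝ) +
            ψ.map fun α => -⟪α, ξ⟫)).sum = ‖ξ‖ ^ 2 - ⟪ψ.sum, ξ⟫ := by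
          rw [Multiset.sum_add, Multiset.sum_singleton, Multiset.sum_add,
            Multiset.sum_replicate, smul_zero, ktrace_aux_sum_map_neg_inner]
          ring
        rw [hs]; linarith
  refine ⟨?_, ?_, ?_, ?_⟩
  · -- open
    have hΩ : Ω = ⋂ p ∈ ((Finset.range 2) ×ˢ Φ.powerset.toFinset : Finset (ℕ × Multiset E)),
        {ξ : E | p.1 + Multiset.card p.2 ≤ k → k ≤ p.1 + Multiset.card p.2 + r →
          (p.1 : ℝ) * ‖ξ‖ ^ 2 - ⟪p.2.sum, ξ⟫ < 0} := by
      ext ξ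
      rw [key ξ]
      simp only [Set.mem_iInter, Finset.mem_product, Finset.mem_range, Multiset.mem_toFinset,
        Multiset.mem_powerset, Set.mem_setOf_eq]
      constructor
      · rintro h ⟨c, ψ⟩ ⟨hc, hψ⟩ h1 h2
        exact h c ψ (by omega) hψ h1 h2
      · intro h c ψ hc hψ h1 h2
        exact h (c, ψ) ⟨by omega, hψ⟩ h1 h2
    rw [hΩ]
    apply isOpen_biInter_finset
    rintro ⟨c, ψ⟩ -
    by_cases hC : c + Multiset.card ψ ≤ k ∧ k ≤ c + Multiset.card ψ + r
    · have : {ξ : E | c + Multiset.card ψ ≤ k → k ≤ c + Multiset.card ψ + r →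
          (c : ℝ) * ‖ξ‖ ^ 2 - ⟪ψ.sum, ξ⟫ < 0} =
          {ξ : E | (c : ℝ) * ‖ξ‖ ^ 2 - ⟪ψ.sum, ξ⟫ < 0} := by
        ext ξ; simp [hC.1, hC.2]
      rw [this]
      exact isOpen_lt ((continuous_const.mul (continuous_norm.pow 2)).sub
        (continuous_const.inner continuous_id)) continuous_const
    · have : {ξ : E | c + Multiset.card ψ ≤ k → k ≤ c + Multiset.card ψ + r →
          (c : ℝ) * ‖ξ‖ ^ 2 - ⟪ψ.sum, ξ⟫ < 0} = Set.univ := by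
        ext ξ
        simp only [Set.mem_setOf_eq, Set.mem_univ, iff_true]
        intro h1 h2
        exact absurd ⟨h1, h2⟩ hC
      rw [this]
      exact isOpen_univ
  · -- convex
    intro ξ hξ η hη a b ha hb hab
    rw [key]
    intro c ψ hc hψ h1 h2
    have Hξ := (key ξ).mp hξ c ψ hc hψ h1 h2
    have Hη := (key η).mp hη c ψ hc hψ h1 h2
    have hi : ⟪ψ.sum, a • ξ + b • η⟫ = a * ⟪ψ.sum, ξ⟫ + b * ⟪ψ.sum, η⟫ := by
      rw [inner_add_right, real_inner_smul_right, real_inner_smul_right]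
    have hn : ‖a • ξ + b • η‖ ≤ a * ‖ξ‖ + b * ‖η‖ := by
      refine (norm_add_le _ _).trans ?_
      rw [norm_smul, norm_smul, Real.norm_eq_abs, Real.norm_eq_abs,
        abs_of_nonneg ha, abs_of_nonneg hb]
    have hsq : ‖a • ξ + b • η‖ ^ 2 ≤ a * ‖ξ‖ ^ 2 + b * ‖η‖ ^ 2 := by
      have h1' : ‖a • ξ + b • η‖ ^ 2 ≤ (a * ‖ξ‖ + b * ‖η‖) ^ 2 := by
        nlinarith [norm_nonneg (a • ξ + b • η)]
      have h2' : (a * ‖ξ‖ + b * ‖η‖) ^ 2 ≤ a * ‖ξ‖ ^ 2 + b * ‖η‖ ^ 2 := by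
        nlinarith [sq_nonneg (‖ξ‖ - ‖η‖), mul_nonneg ha hb]
      linarith
    have hcombo := ktrace_aux_combo_neg ha hb hab Hξ Hη
    have hcn : (0:ℝ) ≤ c := Nat.cast_nonneg c
    rw [hi]
    nlinarith [mul_le_mul_of_nonneg_left hsq hcn]
  · -- scaling
    intro ξ hξ t ht0 ht1
    rw [key]
    intro c ψ hc hψ h1 h2
    have Hξ := (key ξ).mp hξ c ψ hc hψ h1 h2
    rw [norm_smul, real_inner_smul_right, Real.norm_eq_abs, abs_of_nonneg ht0.le]
    have hcn : (0:ℝ) ≤ c := Nat.cast_nonneg c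
    have hns : (0:ℝ) ≤ ‖ξ‖ ^ 2 := sq_nonneg _
    have : (c : ℝ) * (t * ‖ξ‖) ^ 2 - t * ⟪ψ.sum, ξ⟫ ≤ t * ((c:ℝ) * ‖ξ‖ ^ 2 - ⟪ψ.sum, ξ⟫) := by
      nlinarith [mul_nonneg (mul_nonneg hcn hns) (mul_nonneg ht0.le (sub_nonneg.mpr ht1))]
    have htneg : t * ((c:ℝ) * ‖ξ‖ ^ 2 - ⟪ψ.sum, ξ⟫) < 0 :=
      mul_neg_of_pos_of_neg ht0 Hξ
    linarith
  · -- star convex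
    intro y hy a b ha hb hab
    rw [smul_zero, zero_add]
    rcases hy with hy | hy
    · rcases hb.eq_or_lt with h0 | h0
      · right; rw [← h0, zero_smul]; rfl
      · left
        -- reuse the scaling property, proved above inline
        have Hsc : ∀ ξ ∈ Ω, ∀ t : ℝ, 0 < t → t ≤ 1 → t • ξ ∈ Ω := by
          intro ξ hξ t ht0 ht1
          rw [key]
          intro c ψ hc hψ h1 h2
          have Hξ := (key ξ).mp hξ c ψ hc hψ h1 h2
          rw [norm_smul, real_inner_smul_right, Real.norm_eq_abs, abs_of_nonneg ht0.le]
          have hcn : (0:ℝ) ≤ c := Nat.cast_nonneg c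
          have hns : (0:ℝ) ≤ ‖ξ‖ ^ 2 := sq_nonneg _
          have h3 : (c : ℝ) * (t * ‖ξ‖) ^ 2 - t * ⟪ψ.sum, ξ⟫ ≤
              t * ((c:ℝ) * ‖ξ‖ ^ 2 - ⟪ψ.sum, ξ⟫) := by
            nlinarith [mul_nonneg (mul_nonneg hcn hns) (mul_nonneg ht0.le (sub_nonneg.mpr ht1))]
          have htneg : t * ((c:ℝ) * ‖ξ‖ ^ 2 - ⟪ψ.sum, ξ⟫) < 0 :=
            mul_neg_of_pos_of_neg ht0 Hξ
          linarith
        exact Hsc y hy b h0 (by linarith)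
    · right
      rw [Set.mem_singleton_iff] at hy
      rw [hy, smul_zero]; rfl
end

section
/- For every real number s with 0 < s ≤ 16 and every k ∈ {14, 15, 16}, the k-trace of the 16-element multiset of real numbers consisting of s² (once), −s (eight times), and −2s (seven times) is strictly negative. -/
theorem Multiset.exists_le_card_eq {α : Type*} {s : Multiset α} {k : ℕ}
    (hk : k ≤ Multiset.card s) : ∃ t ≤ s, Multiset.card t = k := by
  have hpos : 0 < Multiset.card (Multiset.powersetCard k s) := by
    rw [Multiset.card_powersetCard]
    exact Nat.choose_pos hk
  obtain ⟨t, ht⟩ := Multiset.card_pos_iff_exists_mem.mp hpos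
  exact ⟨t, Multiset.mem_powersetCard.mp ht⟩

theorem Multiset.sum_add_card_sub_nsmul_le_sum {α : Type*} [DecidableEq α] [AddCommMonoid α]
    [PartialOrder α] [IsOrderedAddMonoid α] {s t : Multiset α} {m : α} (hts : t ≤ s)
    (hm : ∀ x ∈ s, m ≤ x) :
    t.sum + Multiset.card (s - t) • m ≤ s.sum := by
  have hrest : Multiset.card (s - t) • m ≤ (s - t).sum :=
    Multiset.card_nsmul_le_sum fun x hx => hm x (Multiset.mem_of_le (Multiset.sub_le_self s t) hx)
  calc t.sum + Multiset.card (s - t) • m ≤ t.sum + (s - t).sum := by gcongr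
    _ = s.sum := by rw [← Multiset.sum_add, add_tsub_cancel_of_le hts]

theorem ktrace_add_card_sub_nsmul_le_sum {s : Multiset ℝ} {k : ℕ} {m : ℝ}
    (hk : k ≤ Multiset.card s) (hm : ∀ x ∈ s, m ≤ x) :
    ktrace k s + (Multiset.card s - k) • m ≤ s.sum := by
  set sums := {x : ℝ | ∃ t ≤ s, Multiset.card t = k ∧ t.sum = x}
  obtain ⟨t₀, ht₀s, ht₀⟩ := Multiset.exists_le_card_eq hk
  have hne : sums.Nonempty := ⟨t₀.sum, t₀, ht₀s, ht₀, rfl⟩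
  have hbound : ∀ x ∈ sums, x ≤ s.sum - (Multiset.card s - k) • m := by
    rintro _ ⟨t, hts, rfl, rfl⟩
    have := Multiset.sum_add_card_sub_nsmul_le_sum hts hm
    rw [Multiset.card_sub hts] at this
    linarith
  have : ktrace k s ≤ s.sum - (Multiset.card s - k) • m := csSup_le hne hbound
  linarith

/-- for `0 < s ≤ 16` and `k ∈ {14, 15, 16}`, the `k`-trace of the multiset
consisting of `s²` (once), `−s` (eight times) and `−2s` (seven times) is negative. -/
theorem stmt1 (s : ℝ) (hs0 : 0 < s) (hs16 : s ≤ 16) (k : ℕ)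
    (hk : k = 14 ∨ k = 15 ∨ k = 16) :
    ktrace k (s ^ 2 ::ₘ (Multiset.replicate 8 (-s) + Multiset.replicate 7 (-(2 * s)))) < 0 := by
  set S := s ^ 2 ::ₘ (Multiset.replicate 8 (-s) + Multiset.replicate 7 (-(2 * s)))
  have hcard : Multiset.card S = 16 := by simp [S]
  have hsum : S.sum = s ^ 2 - 22 * s := by
    simp only [S, Multiset.sum_cons, Multiset.sum_add, Multiset.sum_replicate, nsmul_eq_mul]
    ring
  have hmin : ∀ x ∈ S, -(2 * s) ≤ x := by
    intro x hx
    simp only [S, Multiset.mem_cons, Multiset.mem_add, Multiset.mem_replicate] at hx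
    rcases hx with rfl | ⟨-, rfl⟩ | ⟨-, rfl⟩ <;> nlinarith
  have htrace := ktrace_add_card_sub_nsmul_le_sum (k := k) (by omega) hmin
  rw [hcard, hsum] at htrace
  rcases hk with rfl | rfl | rfl <;> norm_num at htrace <;> nlinarith
end

section
/- With ξ ∈ ℝ^n as defined in the context (n = 2m, m ≥ 1), the following identities hold: (i) ‖ξ‖² = (1/2)·Σ_{k=0}^{m−1} (4k+1)²; (ii) Σ_{1≤i<j≤n} (ξ_i − ξ_j) = (2/3)·m(2m−1)(2m+1) − m²; and hence (iii) ‖ξ‖² − Σ_{1≤i<j≤n} (ξ_i − ξ_j) = m/2 − m², which is strictly negative for every m ≥ 1. (The paper records the value of (iii) as −m² + (11/6)m due to an arithmetic slip; the correct value m/2 − m² is smaller and only strengthens the paper's conclusion.) -/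
open Finset

lemma S1' (N : ℕ) : ∑ i ∈ range N, (i : ℝ) = N * (N - 1) / 2 := by
  induction N with
  | zero => simp
  | succ k ih => rw [sum_range_succ, ih]; push_cast; ring

lemma S2' (N : ℕ) : ∑ i ∈ range N, (i : ℝ)^2 = N * (N - 1) * (2 * N - 1) / 6 := by
  induction N with
  | zero => simp
  | succ k ih => rw [sum_range_succ, ih]; push_cast; ring

lemma poly_sum' (a b c : ℝ) (N : ℕ) :
    ∑ i ∈ range N, (a * (i:ℝ)^2 + b * i + c)
      = a * ((N:ℝ) * (N - 1) * (2 * N - 1) / 6) + b * ((N:ℝ) * (N - 1) / 2) + c * N := by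
  rw [sum_add_distrib, sum_add_distrib, ← mul_sum, ← mul_sum, sum_const, S1', S2']
  simp [nsmul_eq_mul]; ring

lemma fin_double_sum (n : ℕ) (F : ℕ → ℕ → ℝ) :
    ∑ i : Fin n, ∑ j : Fin n, F i j = ∑ i ∈ range n, ∑ j ∈ range n, F i j := by
  rw [Fin.sum_univ_eq_sum_range (fun i => ∑ j : Fin n, F i j)]
  exact sum_congr rfl fun i _ => Fin.sum_univ_eq_sum_range (F i) n

lemma pair_sum (n : ℕ) (F : ℕ → ℝ) :
    ∑ i ∈ range n, ∑ j ∈ range n, (if i < j then F i - F j else 0)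
      = ∑ i ∈ range n, ((n : ℝ) - 1 - 2 * i) * F i := by
  have h1 : ∀ i ∈ range n, ∑ j ∈ range n, (if i < j then F i - F j else 0)
      = (((n - (i+1) : ℕ) : ℝ) * F i - ∑ j ∈ Ico (i+1) n, F j) := by
    intro i _
    rw [← Finset.sum_filter]
    have hf : (range n).filter (fun j => i < j) = Ico (i+1) n := by
      ext x; simp [Finset.mem_filter, Finset.mem_range, Finset.mem_Ico]; omega
    rw [hf, Finset.sum_sub_distrib, Finset.sum_const, Nat.card_Ico, nsmul_eq_mul]
  rw [Finset.sum_congr rfl h1, Finset.sum_sub_distrib]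
  have h2 : ∑ i ∈ range n, ∑ j ∈ Ico (i+1) n, F j = ∑ j ∈ range n, (j : ℝ) * F j := by
    have key : ∀ i ∈ range n, ∑ j ∈ Ico (i+1) n, F j
        = ∑ j ∈ range n, (if i < j then F j else 0) := by
      intro i _
      rw [← Finset.sum_filter]
      congr 1
      ext x; simp [Finset.mem_filter, Finset.mem_range, Finset.mem_Ico]; omega
    rw [Finset.sum_congr rfl key, Finset.sum_comm]
    refine Finset.sum_congr rfl fun j hj => ?_
    rw [← Finset.sum_filter]
    have hf : (range n).filter (fun x => x < j) = range j := by
      simp only [Finset.mem_range] at hj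
      ext x; simp [Finset.mem_filter, Finset.mem_range]; omega
    rw [hf, Finset.sum_const, Finset.card_range, nsmul_eq_mul]
  rw [h2, ← Finset.sum_sub_distrib]
  refine Finset.sum_congr rfl fun i hi => ?_
  simp only [Finset.mem_range] at hi
  have : ((n - (i+1) : ℕ) : ℝ) = (n : ℝ) - i - 1 := by
    have : i + 1 ≤ n := hi
    push_cast [Nat.cast_sub this]
    ring
  rw [this]; ring

/-- the norm and root-sum identities for `ξ = 2ρ − Θ` in `SL_n(ℝ)`, `n = 2m`. -/
theorem stmt2 (m : ℕ) (hm : 1 ≤ m) :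
    let n := 2 * m
    let ξ : EuclideanSpace ℝ (Fin n) := WithLp.toLp 2 fun (i : Fin n) =>
      ((n : ℝ) + 1 - 2 * (((i : ℕ) : ℝ) + 1)) +
        (if (i : ℕ) + 1 ≤ m then -(1 / 2) else (1 / 2))
    (‖ξ‖ ^ 2 = (1 / 2) * ∑ j ∈ Finset.range m, ((4 * (j : ℝ) + 1) ^ 2)) ∧
    (∑ p ∈ Finset.univ.filter (fun p : Fin n × Fin n => p.1 < p.2), (ξ p.1 - ξ p.2)
      = (2 / 3) * m * (2 * (m : ℝ) - 1) * (2 * (m : ℝ) + 1) - (m : ℝ) ^ 2) ∧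
    (‖ξ‖ ^ 2 - ∑ p ∈ Finset.univ.filter (fun p : Fin n × Fin n => p.1 < p.2), (ξ p.1 - ξ p.2)
      = (m : ℝ) / 2 - (m : ℝ) ^ 2) ∧
    ((m : ℝ) / 2 - (m : ℝ) ^ 2 < 0) := by
  intro n ξ
  set G : ℕ → ℝ := fun k => (((2*m : ℕ) : ℝ) + 1 - 2*((k:ℝ)+1)) +
    (if k + 1 ≤ m then -(1/2) else (1/2)) with hG
  have hξ : ∀ i : Fin n, ξ i = G i.val := fun i => rfl
  -- norm as a range sum
  have hnorm : ‖ξ‖^2 = ∑ i ∈ range (2*m), (G i)^2 := by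
    rw [EuclideanSpace.norm_eq, Real.sq_sqrt (by positivity)]
    rw [show (∑ i : Fin n, ‖ξ i‖^2) = ∑ i : Fin n, (fun k => (G k)^2) i.val from
      sum_congr rfl fun i _ => by rw [hξ, Real.norm_eq_abs, sq_abs]]
    exact Fin.sum_univ_eq_sum_range (fun k => (G k)^2) (2*m)
  have e1 : ∀ i ∈ range m, (G i)^2
      = 4*(i:ℝ)^2 + (6 - 8*(m:ℝ))*(i:ℝ) + (2*(m:ℝ) - 3/2)^2 := by
    intro i hi; simp only [Finset.mem_range] at hi
    have h : i + 1 ≤ m := hi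
    simp only [hG, if_pos h]
    push_cast; ring
  have e2 : ∀ i ∈ range m, (G (m + i))^2 = 4*(i:ℝ)^2 + 2*(i:ℝ) + (1/4 : ℝ) := by
    intro i hi
    have h : ¬ (m + i + 1 ≤ m) := by omega
    simp only [hG, if_neg h]
    push_cast; ring
  have e3 : ∀ j ∈ range m, (4*(j:ℝ)+1)^2 = 16*(j:ℝ)^2 + 8*(j:ℝ) + 1 := by
    intro j _; ring
  have key1 : ∑ i ∈ range (2*m), (G i)^2
      = (1/2) * ∑ j ∈ range m, ((4*(j:ℝ)+1)^2) := by
    rw [two_mul, Finset.sum_range_add, Finset.sum_congr rfl e1, Finset.sum_congr rfl e2,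
      Finset.sum_congr rfl e3, poly_sum', poly_sum', poly_sum']
    ring
  -- the pair sum
  have key2 : ∑ p ∈ Finset.univ.filter (fun p : Fin n × Fin n => p.1 < p.2), (ξ p.1 - ξ p.2)
      = ∑ i ∈ range (2*m), (((2*m : ℕ) : ℝ) - 1 - 2*(i:ℝ)) * G i := by
    rw [Finset.sum_filter, Fintype.sum_prod_type]
    have : (∑ i : Fin n, ∑ j : Fin n, if (i, j).1 < (i, j).2 then ξ (i, j).1 - ξ (i, j).2 else 0)
        = ∑ i : Fin n, ∑ j : Fin n,
          (fun a b : ℕ => if a < b then G a - G b else 0) i.val j.val := by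
      refine sum_congr rfl fun i _ => sum_congr rfl fun j _ => ?_
      simp only [hξ, Fin.lt_def]
    exact this.trans ((fin_double_sum (2*m)
      (fun a b => if a < b then G a - G b else 0)).trans (pair_sum (2*m) G))
  have key3 : ∑ i ∈ range (2*m), (((2*m : ℕ) : ℝ) - 1 - 2*(i:ℝ)) * G i
      = (2 / 3) * m * (2 * (m : ℝ) - 1) * (2 * (m : ℝ) + 1) - (m : ℝ) ^ 2 := by
    have f1 : ∀ i ∈ range m, (((2*m : ℕ) : ℝ) - 1 - 2*(i:ℝ)) * G i
        = 4*(i:ℝ)^2 + (5 - 8*(m:ℝ))*(i:ℝ) + (2*(m:ℝ)-1)*(2*(m:ℝ)-3/2) := by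
      intro i hi; simp only [Finset.mem_range] at hi
      have h : i + 1 ≤ m := hi
      simp only [hG, if_pos h]
      push_cast; ring
    have f2 : ∀ i ∈ range m, (((2*m : ℕ) : ℝ) - 1 - 2*((m + i : ℕ):ℝ)) * G (m + i)
        = 4*(i:ℝ)^2 + 3*(i:ℝ) + (1/2 : ℝ) := by
      intro i hi
      have h : ¬ (m + i + 1 ≤ m) := by omega
      simp only [hG, if_neg h]
      push_cast; ring
    rw [show range (2*m) = range (m+m) from by rw [two_mul], Finset.sum_range_add,
      Finset.sum_congr rfl f1, Finset.sum_congr rfl f2, poly_sum', poly_sum']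
    push_cast; ring
  have hhalf : (1/2) * ∑ j ∈ range m, ((4*(j:ℝ)+1)^2)
      = ((2 / 3) * m * (2 * (m : ℝ) - 1) * (2 * (m : ℝ) + 1) - (m : ℝ) ^ 2)
        + ((m : ℝ)/2 - (m:ℝ)^2) := by
    rw [Finset.sum_congr rfl e3, poly_sum']
    push_cast; ring
  have hm' : (1 : ℝ) ≤ (m : ℝ) := by exact_mod_cast hm
  refine ⟨hnorm.trans key1, key2.trans key3, ?_, by nlinarith⟩
  rw [hnorm, key1, key2, key3, hhalf]
  ring
end

section
/- With ξ ∈ ℝ^n as defined in the context (n = 2m, m ≥ 1), set N = (n−1)(n+2)/2 and let M(ξ) be the N-element multiset of real numbers consisting of ‖ξ‖² (once), 0 (n−2 times), and −(ξ_i − ξ_j) for each pair 1 ≤ i < j ≤ n. Then for every natural number d with 8(d+1) ≤ n, the (N−d)-trace of M(ξ) is strictly negative: τ_{N−d}(M(ξ)) < 0. -/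
/-! ### Auxiliary definitions and lemmas -/

/-- The vector `ξ = 2ρ − Θ` as a function. -/
noncomputable def xiF (m : ℕ) : EuclideanSpace ℝ (Fin (2 * m)) := WithLp.toLp 2 fun i =>
  (((2 * m : ℕ) : ℝ) + 1 - 2 * (((i : ℕ) : ℝ) + 1)) +
    (if (i : ℕ) + 1 ≤ m then -(1 / 2) else (1 / 2))

/-- `ξ` as a function of the underlying natural number index. -/
noncomputable def gxi (m j : ℕ) : ℝ :=
  (((2 * m : ℕ) : ℝ) + 1 - 2 * ((j : ℝ) + 1)) + (if j + 1 ≤ m then -(1 / 2) else (1 / 2))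

lemma xiF_eq (m : ℕ) (i : Fin (2 * m)) : xiF m i = gxi m (i : ℕ) := rfl

lemma gaussR (m : ℕ) : ∑ j ∈ Finset.range m, (j : ℝ) = (m : ℝ) ^ 2 / 2 - (m : ℝ) / 2 := by
  induction m with
  | zero => simp
  | succ n ih => rw [Finset.sum_range_succ, ih]; push_cast; ring

lemma filter_lt_Ioi {n : ℕ} (i : Fin n) :
    Finset.filter (fun j => i < j) Finset.univ = Finset.Ioi i := by ext j; simp

lemma filter_gt_Iio {n : ℕ} (j : Fin n) :
    Finset.filter (fun i => i < j) Finset.univ = Finset.Iio j := by ext i; simp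

lemma paircard (n : ℕ) :
    (Finset.univ.filter (fun p : Fin n × Fin n => p.1 < p.2)).card = n * (n - 1) / 2 := by
  rw [Finset.card_filter, Fintype.sum_prod_type]
  have h1 : ∀ i : Fin n, (∑ j : Fin n, if (i, j).1 < (i, j).2 then 1 else 0)
      = n - 1 - (i : ℕ) := by
    intro i
    have : (∑ j : Fin n, if i < j then 1 else 0) = n - 1 - (i : ℕ) := by
      rw [← Finset.sum_filter, Finset.sum_const, filter_lt_Ioi, Fin.card_Ioi, smul_eq_mul,
        mul_one]
    simpa using this
  rw [Finset.sum_congr rfl (fun i _ => h1 i)]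
  rw [Fin.sum_univ_eq_sum_range (fun j => n - 1 - j) n]
  rw [Finset.sum_range_reflect (fun j => j) n]
  have h2 := Finset.sum_range_id_mul_two n
  rw [← h2, Nat.mul_div_cancel _ (by norm_num : 0 < 2)]

lemma pairsum (n : ℕ) (f : Fin n → ℝ) :
    ∑ p ∈ Finset.univ.filter (fun p : Fin n × Fin n => p.1 < p.2), (f p.1 - f p.2)
      = ∑ i : Fin n, (((n - 1 - (i : ℕ) : ℕ) : ℝ) - ((i : ℕ) : ℝ)) * f i := by
  rw [Finset.sum_filter, Fintype.sum_prod_type]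
  have h1 : ∀ i j : Fin n, (if (i, j).1 < (i, j).2 then f (i, j).1 - f (i, j).2 else 0)
      = (if i < j then f i else 0) - (if i < j then f j else 0) := by
    intro i j; by_cases h : i < j <;> simp [h]
  simp_rw [h1, Finset.sum_sub_distrib]
  have h2 : ∀ i : Fin n, (∑ j : Fin n, if i < j then f i else 0)
      = ((n - 1 - (i : ℕ) : ℕ) : ℝ) * f i := by
    intro i
    rw [← Finset.sum_filter, Finset.sum_const, filter_lt_Ioi, Fin.card_Ioi, nsmul_eq_mul]
  have h3 : (∑ j : Fin n, ∑ i : Fin n, if i < j then f j else 0)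
      = ∑ j : Fin n, ((j : ℕ) : ℝ) * f j := by
    refine Finset.sum_congr rfl fun j _ => ?_
    rw [← Finset.sum_filter, Finset.sum_const, filter_gt_Iio, Fin.card_Iio, nsmul_eq_mul]
  have h4 : (∑ i : Fin n, ∑ j : Fin n, if i < j then f j else 0)
      = ∑ j : Fin n, ((j : ℕ) : ℝ) * f j := by rw [Finset.sum_comm]; exact h3
  rw [h4, Finset.sum_congr rfl (fun i _ => h2 i), ← Finset.sum_sub_distrib]
  exact Finset.sum_congr rfl fun i _ => by ring

lemma xiF_bounds (m : ℕ) (hm : 1 ≤ m) (i : Fin (2 * m)) :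
    -(2 * (m : ℝ) - 3 / 2) ≤ xiF m i ∧ xiF m i ≤ 2 * (m : ℝ) - 3 / 2 := by
  have h1 : (i : ℕ) + 1 ≤ 2 * m := i.isLt
  have h2 : ((i : ℕ) : ℝ) + 1 ≤ 2 * (m : ℝ) := by exact_mod_cast h1
  have h3 : (0 : ℝ) ≤ ((i : ℕ) : ℝ) := Nat.cast_nonneg _
  have hm1 : (1 : ℝ) ≤ (m : ℝ) := by exact_mod_cast hm
  rw [xiF_eq, gxi]
  split_ifs with h
  · have h4 : ((i : ℕ) : ℝ) + 1 ≤ (m : ℝ) := by exact_mod_cast h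
    constructor <;> (push_cast; linarith)
  · have h4 : (m : ℝ) ≤ ((i : ℕ) : ℝ) := by exact_mod_cast (by omega : m ≤ (i : ℕ))
    constructor <;> (push_cast; linarith)

lemma sum_sq_sub (m : ℕ) (hm : 1 ≤ m) :
    ∑ i : Fin (2 * m),
        ((xiF m i) ^ 2 - (((2 * m - 1 - (i : ℕ) : ℕ) : ℝ) - ((i : ℕ) : ℝ)) * xiF m i)
      = (m : ℝ) / 2 - (m : ℝ) ^ 2 := by
  have h0 : ∀ i : Fin (2 * m),
      ((xiF m i) ^ 2 - (((2 * m - 1 - (i : ℕ) : ℕ) : ℝ) - ((i : ℕ) : ℝ)) * xiF m i)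
        = (fun j : ℕ => (gxi m j) ^ 2 - (((2 * m - 1 - j : ℕ) : ℝ) - (j : ℝ)) * gxi m j)
            (i : ℕ) := fun i => rfl
  rw [Finset.sum_congr rfl (fun i _ => h0 i)]
  rw [Fin.sum_univ_eq_sum_range
    (fun j : ℕ => (gxi m j) ^ 2 - (((2 * m - 1 - j : ℕ) : ℝ) - (j : ℝ)) * gxi m j) (2 * m)]
  have hsplit : ∀ F : ℕ → ℝ, ∑ j ∈ Finset.range (2 * m), F j
      = ∑ j ∈ Finset.range m, F j + ∑ j ∈ Finset.range m, F (m + j) := by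
    intro F
    rw [Finset.range_eq_Ico, ← Finset.sum_Ico_consecutive F (Nat.zero_le m)
      (by omega : m ≤ 2 * m), ← Finset.range_eq_Ico, Finset.sum_Ico_eq_sum_range,
      show 2 * m - m = m from by omega]
  rw [hsplit]
  have h1 : ∀ j ∈ Finset.range m,
      (gxi m j) ^ 2 - (((2 * m - 1 - j : ℕ) : ℝ) - (j : ℝ)) * gxi m j
        = (j : ℝ) - (m : ℝ) + 3 / 4 := by
    intro j hj
    rw [Finset.mem_range] at hj
    have hc : ((2 * m - 1 - j : ℕ) : ℝ) = 2 * (m : ℝ) - 1 - (j : ℝ) := by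
      rw [Nat.cast_sub (by omega), Nat.cast_sub (by omega)]
      push_cast; ring
    have hg : gxi m j = 2 * (m : ℝ) - 1 - 2 * (j : ℝ) - 1 / 2 := by
      rw [gxi, if_pos (by omega : j + 1 ≤ m)]
      push_cast; ring
    rw [hc, hg]; ring
  have h2 : ∀ j ∈ Finset.range m,
      (gxi m (m + j)) ^ 2 - (((2 * m - 1 - (m + j) : ℕ) : ℝ) - ((m + j : ℕ) : ℝ)) * gxi m (m + j)
        = -(j : ℝ) - 1 / 4 := by
    intro j hj
    rw [Finset.mem_range] at hj
    have e : 2 * m - 1 - (m + j) = m - 1 - j := by omega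
    have hc : ((2 * m - 1 - (m + j) : ℕ) : ℝ) = (m : ℝ) - 1 - (j : ℝ) := by
      rw [e, Nat.cast_sub (by omega), Nat.cast_sub (by omega)]
      push_cast; ring
    have hg : gxi m (m + j) = 2 * (m : ℝ) - 1 - 2 * ((m : ℝ) + (j : ℝ)) + 1 / 2 := by
      rw [gxi, if_neg (by omega : ¬(m + j + 1 ≤ m))]
      push_cast; ring
    rw [hc, hg]; push_cast; ring
  rw [Finset.sum_congr rfl h1, Finset.sum_congr rfl h2]
  have g1 : ∑ j ∈ Finset.range m, ((j : ℝ) - (m : ℝ) + 3 / 4)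
      = (∑ j ∈ Finset.range m, (j : ℝ)) + (∑ _j ∈ Finset.range m, (3 / 4 - (m : ℝ))) := by
    rw [← Finset.sum_add_distrib]
    exact Finset.sum_congr rfl fun j _ => by ring
  have g2 : ∑ j ∈ Finset.range m, (-(j : ℝ) - 1 / 4)
      = -(∑ j ∈ Finset.range m, (j : ℝ)) + (∑ _j ∈ Finset.range m, (-(1 : ℝ) / 4)) := by
    rw [← Finset.sum_neg_distrib, ← Finset.sum_add_distrib]
    exact Finset.sum_congr rfl fun j _ => by ring
  rw [g1, g2, gaussR, Finset.sum_const, Finset.sum_const, Finset.card_range, nsmul_eq_mul,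
    nsmul_eq_mul]
  ring

lemma key (m d : ℕ) (hm : 1 ≤ m) (hd : 8 * (d + 1) ≤ 2 * m) :
    ktrace ((2 * m - 1) * (2 * m + 2) / 2 - d)
      (‖xiF m‖ ^ 2 ::ₘ (Multiset.replicate (2 * m - 2) (0 : ℝ) +
        (Finset.univ.filter (fun p : Fin (2 * m) × Fin (2 * m) => p.1 < p.2)).val.map
          (fun p => -(xiF m p.1 - xiF m p.2)))) < 0 := by
  set N := (2 * m - 1) * (2 * m + 2) / 2 with hN
  set Mset := ‖xiF m‖ ^ 2 ::ₘ (Multiset.replicate (2 * m - 2) (0 : ℝ) +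
      (Finset.univ.filter (fun p : Fin (2 * m) × Fin (2 * m) => p.1 < p.2)).val.map
        (fun p => -(xiF m p.1 - xiF m p.2))) with hMset
  have hm1 : (1 : ℝ) ≤ (m : ℝ) := by exact_mod_cast hm
  have hNeq : N = (2 * m - 1) * (m + 1) := by
    rw [hN, show (2 * m - 1) * (2 * m + 2) = ((2 * m - 1) * (m + 1)) * 2 from by ring,
      Nat.mul_div_cancel _ (by norm_num : 0 < 2)]
  have hdN : d ≤ N := by
    rw [hNeq]
    calc d ≤ m + 1 := by omega
    _ ≤ (2 * m - 1) * (m + 1) := Nat.le_mul_of_pos_left _ (by omega)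
  -- cardinality of Mset
  have hcard : Multiset.card Mset = N := by
    rw [hMset, Multiset.card_cons, Multiset.card_add, Multiset.card_replicate,
      Multiset.card_map, ← Finset.card_def, paircard, hNeq]
    have e1 : (2 * m) * (2 * m - 1) / 2 = m * (2 * m - 1) := by
      rw [show (2 * m) * (2 * m - 1) = (m * (2 * m - 1)) * 2 from by ring,
        Nat.mul_div_cancel _ (by norm_num : 0 < 2)]
    rw [e1]
    obtain ⟨k, rfl⟩ : ∃ k, m = k + 1 := ⟨m - 1, by omega⟩
    have a1 : 2 * (k + 1) - 2 = 2 * k := by omega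
    have a2 : 2 * (k + 1) - 1 = 2 * k + 1 := by omega
    rw [a1, a2]; ring
  -- every element of Mset is at least -(4m - 3)
  have hmb : ∀ x ∈ Mset, -(4 * (m : ℝ) - 3) ≤ x := by
    intro x hx
    rw [hMset, Multiset.mem_cons] at hx
    rcases hx with rfl | hx
    · have := sq_nonneg ‖xiF m‖; linarith
    rw [Multiset.mem_add] at hx
    rcases hx with hx | hx
    · rw [Multiset.eq_of_mem_replicate hx]; linarith
    · rw [Multiset.mem_map] at hx
      obtain ⟨p, hp, rfl⟩ := hx
      have hb1 := (xiF_bounds m hm p.1).2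
      have hb2 := (xiF_bounds m hm p.2).1
      linarith
  -- the total sum of Mset
  have hsum : Mset.sum = (m : ℝ) / 2 - (m : ℝ) ^ 2 := by
    rw [hMset, Multiset.sum_cons, Multiset.sum_add, Multiset.sum_replicate, smul_zero]
    have hmap : ((Finset.univ.filter (fun p : Fin (2 * m) × Fin (2 * m) => p.1 < p.2)).val.map
        (fun p => -(xiF m p.1 - xiF m p.2))).sum
        = ∑ p ∈ Finset.univ.filter (fun p : Fin (2 * m) × Fin (2 * m) => p.1 < p.2),
            -(xiF m p.1 - xiF m p.2) := rfl
    rw [hmap, Finset.sum_neg_distrib, pairsum]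
    have hnorm : ‖xiF m‖ ^ 2 = ∑ i : Fin (2 * m), (xiF m i) ^ 2 := by
      rw [EuclideanSpace.norm_eq, Real.sq_sqrt (by positivity)]
      simp [Real.norm_eq_abs, sq_abs]
    rw [hnorm, zero_add, ← sub_eq_add_neg, ← Finset.sum_sub_distrib]
    exact sum_sq_sub m hm
  -- nonemptiness of the candidate set
  have hNd : N - d ≤ Multiset.card Mset := by rw [hcard]; exact Nat.sub_le _ _
  have hne : {x : ℝ | ∃ t ≤ Mset, Multiset.card t = N - d ∧ t.sum = x}.Nonempty := by
    refine ⟨((Mset.toList.take (N - d) : List ℝ) : Multiset ℝ).sum,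
      ((Mset.toList.take (N - d) : List ℝ) : Multiset ℝ), ?_, ?_, rfl⟩
    · conv_rhs => rw [← Multiset.coe_toList Mset]
      exact Multiset.coe_le.2 (List.take_sublist _ _).subperm
    · rw [Multiset.coe_card, List.length_take, Multiset.length_toList, hcard]
      omega
  -- upper bound on every element of the candidate set
  have hub : ∀ x ∈ {x : ℝ | ∃ t ≤ Mset, Multiset.card t = N - d ∧ t.sum = x},
      x ≤ (m : ℝ) / 2 - (m : ℝ) ^ 2 + (d : ℝ) * (4 * (m : ℝ) - 3) := by
    rintro x ⟨t, ht, htc, rfl⟩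
    have hsplit : t + (Mset - t) = Mset := add_tsub_cancel_of_le ht
    have hu : Mset - t ≤ Mset := tsub_le_self
    have hucard : Multiset.card (Mset - t) = d := by
      rw [Multiset.card_sub ht, hcard, htc]; omega
    have hbelow : ∀ y ∈ Mset - t, -(4 * (m : ℝ) - 3) ≤ y :=
      fun y hy => hmb y (Multiset.mem_of_le hu hy)
    have hge := Multiset.card_nsmul_le_sum hbelow
    rw [hucard, nsmul_eq_mul] at hge
    have hts : t.sum + (Mset - t).sum = Mset.sum := by rw [← Multiset.sum_add, hsplit]
    rw [hsum] at hts
    nlinarith [hge, hts]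
  -- conclude
  have hc : (m : ℝ) / 2 - (m : ℝ) ^ 2 + (d : ℝ) * (4 * (m : ℝ) - 3) < 0 := by
    have hdm : 4 * (d : ℝ) + 4 ≤ (m : ℝ) := by exact_mod_cast (by omega : 4 * d + 4 ≤ m)
    have hd0 : (0 : ℝ) ≤ (d : ℝ) := Nat.cast_nonneg d
    nlinarith [mul_nonneg (by linarith : (0 : ℝ) ≤ (m : ℝ) - 4 * (d : ℝ) - 4)
      (by linarith : (0 : ℝ) ≤ 4 * (m : ℝ) - 3)]
  show ktrace (N - d) Mset < 0
  unfold ktrace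
  exact lt_of_le_of_lt (csSup_le hne hub) hc

/-- for `ξ = 2ρ − Θ` in `SL_n(ℝ)` (`n = 2m`), `N = dim SL_n(ℝ)/SO(n)`, the
`(N−d)`-trace of the Hessian eigenvalue multiset is negative whenever `8(d+1) ≤ n`. -/
theorem stmt3 (m : ℕ) (hm : 1 ≤ m) (d : ℕ) (hd : 8 * (d + 1) ≤ 2 * m) :
    let n := 2 * m
    let N := (n - 1) * (n + 2) / 2
    let ξ : EuclideanSpace ℝ (Fin n) := WithLp.toLp 2 fun i =>
      ((n : ℝ) + 1 - 2 * (((i : ℕ) : ℝ) + 1)) +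
        (if (i : ℕ) + 1 ≤ m then -(1 / 2) else (1 / 2))
    let Mset : Multiset ℝ :=
      ‖ξ‖ ^ 2 ::ₘ (Multiset.replicate (n - 2) (0 : ℝ) +
        (Finset.univ.filter (fun p : Fin n × Fin n => p.1 < p.2)).val.map
          (fun p => -(ξ p.1 - ξ p.2)))
    ktrace (N - d) Mset < 0 := by
  intro n N ξ Mset
  exact key m d hm hd
end

section
/- Let M be a Hausdorff topological space and let Φ : M × ℝ → M be a continuous action of the additive group ℝ on M (so Φ(x,0) = x and Φ(Φ(x,s),t) = Φ(x,s+t) for all x, s, t). Let N ⊆ M be a compact set admitting an open neighborhood U ⊇ N such that M \ U and M \ N are path-connected and the inclusion-induced homomorphism π₁(M \ U) → π₁(M \ N) is surjective (for some, equivalently any, basepoint in M \ U). For t ∈ ℝ set N_t = Φ(N × {t}) and for s ≤ t set W_{s,t} = Φ(N × [s,t]). Then for all real s < t such that M \ W_{s,t} is path-connected, N_s W_{s,t}-dominates N_t (with respect to any basepoint x₀ ∈ M \ W_{s,t}; note that the sets N_t and W_{s,t} are closed and each complement M \ N_t is path-connected, being homeomorphic to M \ N). -/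
open CategoryTheory FundamentalGroupoid

/-- The homomorphism `π₁(A, x₀) →* π₁(B, x₀)` induced by an inclusion `A ⊆ B` of subspaces. -/
noncomputable def inducedPi1 {M : Type} [TopologicalSpace M] {A B : Set M} (hAB : A ⊆ B)
    {x₀ : M} (hx : x₀ ∈ A) :
    FundamentalGroup A ⟨x₀, hx⟩ →* FundamentalGroup B ⟨x₀, hAB hx⟩ :=
  Functor.mapEnd (FundamentalGroupoid.mk (⟨x₀, hx⟩ : A))
    (fundamentalGroupoidFunctor.map (X := TopCat.of A) (Y := TopCat.of B)
      (TopCat.ofHom (⟨Set.inclusion hAB, continuous_inclusion hAB⟩ : C(A, B))))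

/-- `N₁` `W`-dominates `N₂` (with basepoint `x₀`): there is a homomorphism
`κ : π₁(M \ N₂, x₀) →* π₁(M \ N₁, x₀)` with `κ ∘ ι_{N₂} = ι_{N₁}`. -/
def WDominates {M : Type} [TopologicalSpace M] (N₁ N₂ W : Set M) (x₀ : M) : Prop :=
  ∃ (h₁ : Wᶜ ⊆ N₁ᶜ) (h₂ : Wᶜ ⊆ N₂ᶜ) (hx : x₀ ∈ Wᶜ)
    (κ : FundamentalGroup (↥(N₂ᶜ)) ⟨x₀, h₂ hx⟩ →* FundamentalGroup (↥(N₁ᶜ)) ⟨x₀, h₁ hx⟩),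
    κ.comp (inducedPi1 h₂ hx) = inducedPi1 h₁ hx

open scoped FundamentalGroupoid in
/-- If there is a continuous map `F : N₂ᶜ → N₁ᶜ` such that `F` restricted to `Wᶜ`
is homotopic (inside `N₁ᶜ`) to the inclusion `Wᶜ ⊆ N₁ᶜ`, then `N₁ ⇒_W N₂`. -/
theorem wDominates_of_homotopy {M : Type} [TopologicalSpace M] {N₁ N₂ W : Set M}
    (h₁ : Wᶜ ⊆ N₁ᶜ) (h₂ : Wᶜ ⊆ N₂ᶜ) {x₀ : M} (hx : x₀ ∈ Wᶜ)
    (F : C(TopCat.of ↥(N₂ᶜ), TopCat.of ↥(N₁ᶜ)))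
    (H : ContinuousMap.Homotopy
      (⟨Set.inclusion h₁, continuous_inclusion h₁⟩ :
        C(TopCat.of ↥(Wᶜ), TopCat.of ↥(N₁ᶜ)))
      (F.comp ⟨Set.inclusion h₂, continuous_inclusion h₂⟩)) :
    WDominates N₁ N₂ W x₀ := by
  classical
  set incl₁ : C(TopCat.of ↥(Wᶜ), TopCat.of ↥(N₁ᶜ)) :=
    ⟨Set.inclusion h₁, continuous_inclusion h₁⟩ with hincl₁
  set incl₂ : C(TopCat.of ↥(Wᶜ), TopCat.of ↥(N₂ᶜ)) :=
    ⟨Set.inclusion h₂, continuous_inclusion h₂⟩ with hincl₂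
  let α := FundamentalGroupoidFunctor.homotopicMapsNatIso H
  let pt : FundamentalGroupoid ↥(Wᶜ) := FundamentalGroupoid.mk (⟨x₀, hx⟩ : ↥(Wᶜ))
  let e : (FundamentalGroupoid.mk (⟨x₀, h₁ hx⟩ : ↥(N₁ᶜ))) ≅
      (FundamentalGroupoid.map F).obj (FundamentalGroupoid.mk (⟨x₀, h₂ hx⟩ : ↥(N₂ᶜ))) :=
    (asIso α).app pt
  let κ : FundamentalGroup (↥(N₂ᶜ)) ⟨x₀, h₂ hx⟩ →* FundamentalGroup (↥(N₁ᶜ)) ⟨x₀, h₁ hx⟩ :=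
    (e.conj.symm.toMonoidHom).comp
      (Functor.mapEnd (FundamentalGroupoid.mk (⟨x₀, h₂ hx⟩ : ↥(N₂ᶜ))) (FundamentalGroupoid.map F))
  refine ⟨h₁, h₂, hx, κ, ?_⟩
  refine MonoidHom.ext fun φ => ?_
  have hcomp : ∀ (p : pt ⟶ pt),
      (FundamentalGroupoid.map (F.comp incl₂)).map p =
        (FundamentalGroupoid.map F).map ((FundamentalGroupoid.map incl₂).map p) := by
    intro p
    refine Quotient.inductionOn p fun q => ?_
    rfl
  have key : Functor.mapEnd (FundamentalGroupoid.mk (⟨x₀, h₂ hx⟩ : ↥(N₂ᶜ)))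
      (FundamentalGroupoid.map F) (inducedPi1 h₂ hx φ) = e.conj (inducedPi1 h₁ hx φ) := by
    show (FundamentalGroupoid.map F).map ((FundamentalGroupoid.map incl₂).map φ) =
      e.conj ((FundamentalGroupoid.map incl₁).map φ)
    refine Eq.trans ?_ (Iso.conj_apply e _).symm
    have hnat := α.naturality (X := pt) (Y := pt) φ
    -- hnat : (πₘ incl₁).map φ.hom ≫ α.app pt = α.app pt ≫ (πₘ (F.comp incl₂)).map φ.hom
    have : e.hom = α.app pt := rfl
    exact (Iso.eq_inv_comp e).mpr
      ((congrArg (fun x => α.app pt ≫ x) (hcomp φ)).symm.trans hnat.symm)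
  show e.conj.symm (Functor.mapEnd _ (FundamentalGroupoid.map F) (inducedPi1 h₂ hx φ)) =
    inducedPi1 h₁ hx φ
  rw [key, MulEquiv.symm_apply_apply]

/-- flowing a compact branching locus `N` along a continuous `ℝ`-action:
`N_s` is `W_{s,t}`-dominated... precisely, `N_s ⇒_{W_{s,t}} N_t` for all `s < t`. -/
theorem stmt11 {M : Type} [TopologicalSpace M] [T2Space M]
    (Φ : M × ℝ → M) (hΦcont : Continuous Φ)
    (hΦ0 : ∀ x : M, Φ (x, 0) = x)
    (hΦadd : ∀ (x : M) (s t : ℝ), Φ (Φ (x, s), t) = Φ (x, s + t))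
    (N U : Set M) (hN : IsCompact N) (hU : IsOpen U) (hNU : N ⊆ U)
    (hpcU : IsPathConnected (Uᶜ)) (hpcN : IsPathConnected (Nᶜ))
    (hsurj : ∀ (y₀ : M) (hy : y₀ ∈ Uᶜ),
      Function.Surjective (inducedPi1 (Set.compl_subset_compl.mpr hNU) hy))
    (s t : ℝ) (hst : s < t)
    (hpcW : IsPathConnected ((Φ '' (N ×ˢ Set.Icc s t))ᶜ))
    (x₀ : M) (hx₀ : x₀ ∈ (Φ '' (N ×ˢ Set.Icc s t))ᶜ) :
    WDominates ((fun x => Φ (x, s)) '' N) ((fun x => Φ (x, t)) '' N)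
      (Φ '' (N ×ˢ Set.Icc s t)) x₀ := by
  set W : Set M := Φ '' (N ×ˢ Set.Icc s t) with hW
  set Ns : Set M := (fun x => Φ (x, s)) '' N with hNs
  set Nt : Set M := (fun x => Φ (x, t)) '' N with hNt
  have h₁ : Wᶜ ⊆ Nsᶜ := by
    apply Set.compl_subset_compl.mpr
    rintro _ ⟨n, hn, rfl⟩
    exact ⟨(n, s), ⟨hn, le_refl s, hst.le⟩, rfl⟩
  have h₂ : Wᶜ ⊆ Ntᶜ := by
    apply Set.compl_subset_compl.mpr
    rintro _ ⟨n, hn, rfl⟩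
    exact ⟨(n, t), ⟨hn, hst.le, le_refl t⟩, rfl⟩
  -- the backwards flow map `N_tᶜ → N_sᶜ`
  have hFmem : ∀ x : ↥(Ntᶜ), Φ ((x : M), s - t) ∈ Nsᶜ := by
    rintro ⟨x, hxmem⟩ ⟨n, hn, heq⟩
    apply hxmem
    refine ⟨n, hn, ?_⟩
    have h1 : Φ (Φ (n, s), t - s) = Φ (n, t) := by rw [hΦadd]; ring_nf
    have h2 : Φ (Φ (x, s - t), t - s) = x := by
      have hz : s - t + (t - s) = 0 := by ring
      rw [hΦadd, hz, hΦ0]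
    simp only at heq
    rw [heq] at h1
    rw [h2] at h1
    show Φ (n, t) = x
    exact h1.symm
  let F : C(TopCat.of ↥(Ntᶜ), TopCat.of ↥(Nsᶜ)) :=
    ⟨fun x => ⟨Φ (x.1, s - t), hFmem x⟩, by
      apply Continuous.subtype_mk
      exact hΦcont.comp (continuous_subtype_val.prodMk continuous_const)⟩
  have hHmem : ∀ (τ : unitInterval) (x : ↥(Wᶜ)),
      Φ ((x : M), (τ : ℝ) * (s - t)) ∈ Nsᶜ := by
    rintro τ ⟨x, hxmem⟩ ⟨n, hn, heq⟩
    apply hxmem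
    refine ⟨(n, s + (τ : ℝ) * (t - s)), ⟨hn, ?_, ?_⟩, ?_⟩
    · show s ≤ s + (τ : ℝ) * (t - s)
      nlinarith [τ.2.1, τ.2.2, hst.le]
    · show s + (τ : ℝ) * (t - s) ≤ t
      nlinarith [τ.2.1, τ.2.2, hst.le]
    · have h1 : Φ (Φ (n, s), (τ : ℝ) * (t - s)) = Φ (n, s + (τ : ℝ) * (t - s)) := hΦadd _ _ _
      have h2 : Φ (Φ (x, (τ : ℝ) * (s - t)), (τ : ℝ) * (t - s)) = x := by
        rw [hΦadd, show (τ : ℝ) * (s - t) + (τ : ℝ) * (t - s) = 0 by ring, hΦ0]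
      simp only at heq
      rw [heq, h2] at h1
      show Φ (n, s + (τ : ℝ) * (t - s)) = x
      exact h1.symm
  let H : ContinuousMap.Homotopy
      (⟨Set.inclusion h₁, continuous_inclusion h₁⟩ :
        C(TopCat.of ↥(Wᶜ), TopCat.of ↥(Nsᶜ)))
      (F.comp ⟨Set.inclusion h₂, continuous_inclusion h₂⟩) :=
    { toFun := fun p => ⟨Φ (p.2.1, (p.1 : ℝ) * (s - t)), hHmem p.1 p.2⟩
      continuous_toFun := by
        apply Continuous.subtype_mk
        apply hΦcont.comp
        apply Continuous.prodMk
        · exact continuous_subtype_val.comp continuous_snd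
        · exact (continuous_subtype_val.comp continuous_fst).mul continuous_const
      map_zero_left := fun x => by
        apply Subtype.ext
        show Φ (x.1, ((0 : unitInterval) : ℝ) * (s - t)) = x.1
        rw [Set.Icc.coe_zero, zero_mul, hΦ0]
      map_one_left := fun x => by
        apply Subtype.ext
        show Φ (x.1, ((1 : unitInterval) : ℝ) * (s - t)) = Φ (x.1, s - t)
        rw [Set.Icc.coe_one, one_mul] }
  exact wDominates_of_homotopy h₁ h₂ hx₀ F H
end
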